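/- Let Γ be a random vector in ℂ^N with ‖Γ‖ = 1 almost surely, and let K = E[Γ Γ*] be its expected rank-one matrix. Then a unit vector u ∈ ℂ^N minimizes E‖u u* − Γ Γ*‖_F² over unit vectors if and only if u is an eigenvector of K whose eigenvalue equals the largest eigenvalue of K. (Hence the Veronese–Whitney extrinsic mean of the random projective point [Γ] is the projective point of an eigenvector of E[ΓΓ*] corresponding to its largest eigenvalue.) -/

import Mathlib

open MeasureTheory ProbabilityTheory
open scoped ComplexConjugate

/-- The product (Borel) measurable structure on `ℂ^N`. -/
noncomputable instance {N : ℕ} : MeasurableSpace (EuclideanSpace ℂ (Fin N)) :=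
  MeasurableSpace.comap (fun x : EuclideanSpace ℂ (Fin N) => x.ofLp) MeasurableSpace.pi

/-!
For unit vectors `a, b` one has `‖a a* − b b*‖_F² = 2 − 2 |⟨a, b⟩|²`, and `E |⟨u, Γ⟩|² = u* K u`,
so `E‖u u* − Γ Γ*‖_F² = 2 − 2 u* K u`: minimising it over the unit sphere is maximising the
Rayleigh quotient of the Hermitian matrix `K`. A maximiser of the Rayleigh quotient on the sphere
is an eigenvector (Lagrange multipliers), and its eigenvalue, being the maximal value of the
quotient, dominates every eigenvalue. Conversely, by compactness the maximum is attained, hence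
by an eigenvector, so it is at most the top eigenvalue, which a top eigenvector attains.
-/

section RayleighExtrinsicMean

open Metric Matrix
open scoped InnerProductSpace

namespace ContinuousLinearMap

variable {𝕜 E : Type*} [RCLike 𝕜] [NormedAddCommGroup E] [InnerProductSpace 𝕜 E]
  {T : E →L[𝕜] E}

lemma reApplyInnerSelf_eq_of_apply_eq_smul {ξ : ℝ} {v : E} (h : T v = (ξ : 𝕜) • v) :
    T.reApplyInnerSelf v = ξ * ‖v‖ ^ 2 := by
  rw [reApplyInnerSelf_apply, h, inner_smul_left, RCLike.conj_ofReal, inner_self_eq_norm_sq_to_K,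
    ← RCLike.ofReal_pow, ← RCLike.ofReal_mul, RCLike.ofReal_re]

lemma le_reApplyInnerSelf_of_isMaxOn {u : E} (hmax : IsMaxOn T.reApplyInnerSelf (sphere 0 1) u)
    {ξ : ℝ} {v : E} (hv : v ≠ 0) (h : T v = (ξ : 𝕜) • v) : ξ ≤ T.reApplyInnerSelf u := by
  set w : E := ((‖v‖⁻¹ : ℝ) : 𝕜) • v
  have hw : ‖w‖ = 1 := by
    simp only [w, norm_smul, RCLike.norm_ofReal, abs_inv, abs_norm]
    exact inv_mul_cancel₀ (norm_ne_zero_iff.mpr hv)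
  have hTw : T w = (ξ : 𝕜) • w := by rw [map_smul, h, smul_comm]
  simpa [reApplyInnerSelf_eq_of_apply_eq_smul hTw, hw] using
    hmax (mem_sphere_zero_iff_norm.mpr hw)

end ContinuousLinearMap

namespace IsSelfAdjoint

variable {𝕜 E : Type*} [RCLike 𝕜] [NormedAddCommGroup E] [InnerProductSpace 𝕜 E]
  [CompleteSpace E] {T : E →L[𝕜] E}

lemma apply_eq_smul_of_isMaxOn_sphere (hT : IsSelfAdjoint T) {u : E} (hu : ‖u‖ = 1)
    (hmax : IsMaxOn T.reApplyInnerSelf (sphere 0 1) u) :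
    T u = (T.reApplyInnerSelf u : 𝕜) • u := by
  have h := hT.eq_smul_self_of_isLocalExtrOn (x₀ := u) (Or.inr (hu ▸ hmax).localize)
  rwa [ContinuousLinearMap.rayleighQuotient, hu, one_pow, div_one] at h

theorem isMaxOn_reApplyInnerSelf_sphere_iff [FiniteDimensional 𝕜 E] (hT : IsSelfAdjoint T)
    {u : E} (hu : ‖u‖ = 1) :
    IsMaxOn T.reApplyInnerSelf (sphere 0 1) u ↔
      ∃ η : ℝ, T u = (η : 𝕜) • u ∧
        ∀ ξ : ℝ, (∃ v, v ≠ 0 ∧ T v = (ξ : 𝕜) • v) → ξ ≤ η := by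
  constructor
  · intro hmax
    exact ⟨_, hT.apply_eq_smul_of_isMaxOn_sphere hu hmax,
      fun ξ ⟨v, hv, h⟩ => ContinuousLinearMap.le_reApplyInnerSelf_of_isMaxOn hmax hv h⟩
  · rintro ⟨η, hTu, htop⟩
    refine isMaxOn_iff.mpr fun x hx => ?_
    have := FiniteDimensional.proper_rclike 𝕜 E
    obtain ⟨x₀, hx₀, hmax₀⟩ := (isCompact_sphere (0 : E) 1).exists_isMaxOn
      ⟨u, mem_sphere_zero_iff_norm.mpr hu⟩ T.reApplyInnerSelf_continuous.continuousOn
    have hx₀₁ : ‖x₀‖ = 1 := mem_sphere_zero_iff_norm.mp hx₀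
    have hx₀η : T.reApplyInnerSelf x₀ ≤ η :=
      htop _ ⟨x₀, norm_ne_zero_iff.mp (by simp [hx₀₁]),
        hT.apply_eq_smul_of_isMaxOn_sphere hx₀₁ hmax₀⟩
    have hu_val : T.reApplyInnerSelf u = η := by
      rw [ContinuousLinearMap.reApplyInnerSelf_eq_of_apply_eq_smul hTu, hu, one_pow, mul_one]
    linarith [isMaxOn_iff.mp hmax₀ x hx]

end IsSelfAdjoint

variable {ι : Type*} [Fintype ι]

theorem Matrix.IsHermitian.isMaxOn_reApplyInnerSelf_sphere_iff [DecidableEq ι] {A : Matrix ι ι ℂ}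
    (hA : A.IsHermitian) {u : EuclideanSpace ℂ ι} (hu : ‖u‖ = 1) :
    IsMaxOn (toEuclideanCLM (𝕜 := ℂ) A).reApplyInnerSelf (sphere 0 1) u ↔
      ∃ η : ℝ, A *ᵥ u.ofLp = (η : ℂ) • u.ofLp ∧
        ∀ ξ : ℝ, (∃ v : ι → ℂ, v ≠ 0 ∧ A *ᵥ v = (ξ : ℂ) • v) → ξ ≤ η := by
  have hmulVec : ∀ (c : ℂ) (v : EuclideanSpace ℂ ι),
      toEuclideanCLM (𝕜 := ℂ) A v = c • v ↔ A *ᵥ v.ofLp = c • v.ofLp := fun _ _ =>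
    (WithLp.ofLp_injective 2).eq_iff.symm
  rw [(IsSelfAdjoint.map hA _).isMaxOn_reApplyInnerSelf_sphere_iff hu]
  simp only [hmulVec, (WithLp.equiv 2 (ι → ℂ)).exists_congr_left, WithLp.equiv_symm_apply,
    WithLp.ofLp_toLp, ne_eq, WithLp.toLp_eq_zero]
  exact Iff.rfl

lemma norm_inner_sq_eq_sum (v w : EuclideanSpace ℂ ι) :
    ((‖⟪v, w⟫_ℂ‖ ^ 2 : ℝ) : ℂ) = ∑ j, ∑ k, conj (v j) * (w j * conj (w k)) * v k := by
  rw [Complex.ofReal_pow, ← Complex.mul_conj', EuclideanSpace.inner_eq_star_dotProduct,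
    dotProduct, map_sum, Finset.sum_mul_sum]
  refine Finset.sum_congr rfl fun j _ => Finset.sum_congr rfl fun k _ => ?_
  simp only [Pi.star_apply, RCLike.star_def, map_mul, Complex.conj_conj]
  ring

lemma inner_toEuclideanCLM_self [DecidableEq ι] (A : Matrix ι ι ℂ) (v : EuclideanSpace ℂ ι) :
    ⟪v, toEuclideanCLM (𝕜 := ℂ) A v⟫_ℂ = ∑ j, ∑ k, conj (v j) * A j k * v k := by
  simp only [EuclideanSpace.inner_eq_star_dotProduct, ofLp_toEuclideanCLM, dotProduct, mulVec,
    Finset.sum_mul, Pi.star_apply, RCLike.star_def]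
  refine Finset.sum_congr rfl fun j _ => Finset.sum_congr rfl fun k _ => ?_
  ring

lemma sum_norm_sq_sub_mul_conj (a b : EuclideanSpace ℂ ι) :
    ∑ j, ∑ k, ‖a j * conj (a k) - b j * conj (b k)‖ ^ 2
      = ‖a‖ ^ 4 + ‖b‖ ^ 4 - 2 * ‖⟪a, b⟫_ℂ‖ ^ 2 := by
  have hdiag : ∀ x : EuclideanSpace ℂ ι, ∑ j, ∑ k, ‖x j * conj (x k)‖ ^ 2 = ‖x‖ ^ 4 := by
    intro x
    simp only [norm_mul, RCLike.norm_conj, mul_pow, ← Finset.sum_mul_sum,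
      ← EuclideanSpace.norm_sq_eq]
    ring
  have hcross :
      ∑ j, ∑ k, RCLike.re ⟪a j * conj (a k), b j * conj (b k)⟫_ℂ = ‖⟪a, b⟫_ℂ‖ ^ 2 := by
    rw [← Complex.ofReal_re (‖⟪a, b⟫_ℂ‖ ^ 2), norm_inner_sq_eq_sum, Complex.re_sum]
    refine Finset.sum_congr rfl fun j _ => ?_
    rw [Complex.re_sum]
    refine Finset.sum_congr rfl fun k _ => ?_
    simp only [RCLike.inner_apply, map_mul, Complex.conj_conj, RCLike.re_to_complex]
    ring_nf
  simp only [norm_sub_sq (𝕜 := ℂ), Finset.sum_add_distrib, Finset.sum_sub_distrib,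
    ← Finset.mul_sum, hdiag, hcross]
  ring

section SecondMoment

variable {Ω : Type*} [MeasurableSpace Ω] {μ : Measure Ω} {Γ : Ω → EuclideanSpace ℂ ι}

noncomputable def secondMomentMatrix (μ : Measure Ω) (Γ : Ω → EuclideanSpace ℂ ι) :
    Matrix ι ι ℂ :=
  Matrix.of fun j k => ∫ ω, Γ ω j * conj (Γ ω k) ∂μ

omit [Fintype ι] in
lemma isHermitian_secondMomentMatrix (μ : Measure Ω) (Γ : Ω → EuclideanSpace ℂ ι) :
    (secondMomentMatrix μ Γ).IsHermitian := by
  ext j k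
  simp only [secondMomentMatrix, conjTranspose_apply, of_apply, RCLike.star_def, ← integral_conj,
    map_mul, Complex.conj_conj, mul_comm]

lemma integrable_mul_conj_apply [IsFiniteMeasure μ]
    (hm : ∀ j, AEStronglyMeasurable (fun ω => Γ ω j) μ) (hΓ : ∀ᵐ ω ∂μ, ‖Γ ω‖ ≤ 1) (j k : ι) :
    Integrable (fun ω => Γ ω j * conj (Γ ω k)) μ := by
  refine Integrable.of_bound ((hm j).mul (hm k).star) 1 ?_
  filter_upwards [hΓ] with ω hω
  rw [norm_mul, RCLike.norm_conj]
  exact mul_le_one₀ ((PiLp.norm_apply_le _ j).trans hω) (norm_nonneg _)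
    ((PiLp.norm_apply_le _ k).trans hω)

lemma integrable_ofReal_norm_inner_sq
    (hint : ∀ j k, Integrable (fun ω => Γ ω j * conj (Γ ω k)) μ) (v : EuclideanSpace ℂ ι) :
    Integrable (fun ω => ((‖⟪v, Γ ω⟫_ℂ‖ ^ 2 : ℝ) : ℂ)) μ := by
  simp only [norm_inner_sq_eq_sum]
  exact integrable_finsetSum _ fun j _ => integrable_finsetSum _ fun k _ =>
    ((hint j k).const_mul _).mul_const _

lemma integrable_norm_inner_sq
    (hint : ∀ j k, Integrable (fun ω => Γ ω j * conj (Γ ω k)) μ) (v : EuclideanSpace ℂ ι) :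
    Integrable (fun ω => ‖⟪v, Γ ω⟫_ℂ‖ ^ 2) μ := by
  simpa only [RCLike.re_to_complex, Complex.ofReal_re] using
    (integrable_ofReal_norm_inner_sq hint v).re

lemma integral_ofReal_norm_inner_sq [DecidableEq ι]
    (hint : ∀ j k, Integrable (fun ω => Γ ω j * conj (Γ ω k)) μ) (v : EuclideanSpace ℂ ι) :
    ∫ ω, ((‖⟪v, Γ ω⟫_ℂ‖ ^ 2 : ℝ) : ℂ) ∂μ
      = ⟪v, toEuclideanCLM (𝕜 := ℂ) (secondMomentMatrix μ Γ) v⟫_ℂ := by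
  simp only [norm_inner_sq_eq_sum, inner_toEuclideanCLM_self, secondMomentMatrix, of_apply]
  rw [integral_finsetSum _ fun j _ => integrable_finsetSum _ fun k _ =>
    ((hint j k).const_mul _).mul_const _]
  refine Finset.sum_congr rfl fun j _ => ?_
  rw [integral_finsetSum _ fun k _ => ((hint j k).const_mul _).mul_const _]
  refine Finset.sum_congr rfl fun k _ => ?_
  rw [integral_mul_const, integral_const_mul]

lemma integral_norm_inner_sq [DecidableEq ι]
    (hint : ∀ j k, Integrable (fun ω => Γ ω j * conj (Γ ω k)) μ) (v : EuclideanSpace ℂ ι) :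
    ∫ ω, ‖⟪v, Γ ω⟫_ℂ‖ ^ 2 ∂μ
      = (toEuclideanCLM (𝕜 := ℂ) (secondMomentMatrix μ Γ)).reApplyInnerSelf v := by
  have h := congrArg Complex.re (integral_ofReal_norm_inner_sq hint v)
  rwa [integral_complex_ofReal, Complex.ofReal_re, ← RCLike.re_to_complex, inner_re_symm] at h

lemma integral_sum_norm_sq_sub_mul_conj [DecidableEq ι] [IsProbabilityMeasure μ]
    (hint : ∀ j k, Integrable (fun ω => Γ ω j * conj (Γ ω k)) μ)
    (hΓ : ∀ᵐ ω ∂μ, ‖Γ ω‖ = 1) {v : EuclideanSpace ℂ ι} (hv : ‖v‖ = 1) :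
    ∫ ω, ∑ j, ∑ k, ‖v j * conj (v k) - Γ ω j * conj (Γ ω k)‖ ^ 2 ∂μ
      = 2 - 2 * (toEuclideanCLM (𝕜 := ℂ) (secondMomentMatrix μ Γ)).reApplyInnerSelf v := by
  calc ∫ ω, ∑ j, ∑ k, ‖v j * conj (v k) - Γ ω j * conj (Γ ω k)‖ ^ 2 ∂μ
      = ∫ ω, (2 - 2 * ‖⟪v, Γ ω⟫_ℂ‖ ^ 2) ∂μ := by
        refine integral_congr_ae ?_
        filter_upwards [hΓ] with ω hω
        rw [sum_norm_sq_sub_mul_conj, hv, hω]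
        ring
    _ = 2 - 2 * ∫ ω, ‖⟪v, Γ ω⟫_ℂ‖ ^ 2 ∂μ := by
        rw [integral_sub (integrable_const 2) ((integrable_norm_inner_sq hint v).const_mul 2),
          integral_const_mul, integral_const, probReal_univ, one_smul]
    _ = _ := by rw [integral_norm_inner_sq hint]

end SecondMoment

end RayleighExtrinsicMean

/-- Let `Γ` be a random unit vector in `ℂ^N` and `K = E[Γ Γ*]`.  A unit
vector `u` minimizes `E‖u u* − Γ Γ*‖_F²` over unit vectors iff `u` is an eigenvector
of `K` whose eigenvalue is the largest eigenvalue of `K` (the VW extrinsic mean of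
`[Γ]` is the projective point of such an eigenvector of `E[ΓΓ*]`). -/
theorem vw_extrinsic_mean_random
    {N : ℕ} {Ω : Type*} [MeasureSpace Ω] [IsProbabilityMeasure (ℙ : Measure Ω)]
    (Γ : Ω → EuclideanSpace ℂ (Fin N)) (hΓmeas : Measurable Γ)
    (hΓ : ∀ᵐ ω : Ω, ‖Γ ω‖ = 1)
    (K : Matrix (Fin N) (Fin N) ℂ)
    (hK : K = Matrix.of fun j k => ∫ ω, Γ ω j * conj (Γ ω k))
    (f : EuclideanSpace ℂ (Fin N) → ℝ)
    (hf : f = fun u => ∫ ω, ∑ j : Fin N, ∑ k : Fin N,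
      ‖u j * conj (u k) - Γ ω j * conj (Γ ω k)‖ ^ 2) :
    ∀ u : EuclideanSpace ℂ (Fin N), ‖u‖ = 1 →
      ((∀ v : EuclideanSpace ℂ (Fin N), ‖v‖ = 1 → f u ≤ f v) ↔
        ∃ η : ℝ, K.mulVec (fun j => u j) = (η : ℂ) • (fun j => u j) ∧
          ∀ ξ : ℝ, (∃ v : Fin N → ℂ, v ≠ 0 ∧ K.mulVec v = (ξ : ℂ) • v) → ξ ≤ η) := by
  intro u hu
  subst hK hf
  have hm : ∀ j, AEStronglyMeasurable (fun ω => Γ ω j) ℙ := fun j =>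
    ((measurable_pi_apply j).comp ((comap_measurable _).comp hΓmeas)).aestronglyMeasurable
  have hint := integrable_mul_conj_apply hm (hΓ.mono fun _ h => h.le)
  refine Iff.trans ?_
    ((isHermitian_secondMomentMatrix ℙ Γ).isMaxOn_reApplyInnerSelf_sphere_iff hu)
  rw [isMaxOn_iff]
  refine forall_congr' fun v => ?_
  rw [mem_sphere_zero_iff_norm]
  refine imp_congr_right fun hv => ?_
  simp only [integral_sum_norm_sq_sub_mul_conj hint hΓ, hu, hv]
  constructor <;> intro h <;> linarith
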